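/- Let (S_j)_{j=1}^m be a partition of {1,…,p} and define P^{GL} ∈ R^{p×p} by P^{GL}_{ij} = 1/√|S_k| if i and j both lie in the same block S_k, and 0 otherwise. Then for all w ∈ R^p, ‖P^{GL}·Diag(w)‖_* = Σ_j ‖w_{S_j}‖_2, the group Lasso penalty. -/

import Mathlib

/-!
With `P = P^{GL}` and `M = P · Diag(w)`, the columns of `P` inside a block `S_k` are all equal to
the unit vector `1_{S_k}/√|S_k|`, so `MᵀM` is block diagonal with the rank-one blocks
`w_{S_k} w_{S_k}ᵀ`. The positive semidefinite square root of such a block is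
`w_{S_k} w_{S_k}ᵀ / ‖w_{S_k}‖₂`, whose trace is `‖w_{S_k}‖₂`.
-/

noncomputable def traceNorm {n p : ℕ} (M : Matrix (Fin n) (Fin p) ℝ) : ℝ :=
  ((((Matrix.posSemidef_conjTranspose_mul_self M).1.eigenvectorUnitary : Matrix (Fin p) (Fin p) ℝ) *
    Matrix.diagonal ((RCLike.ofReal : ℝ → ℝ) ∘ (Real.sqrt ·) ∘
      (Matrix.posSemidef_conjTranspose_mul_self M).1.eigenvalues) *
    (star (Matrix.posSemidef_conjTranspose_mul_self M).1.eigenvectorUnitary :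
      Matrix (Fin p) (Fin p) ℝ))).trace

open Matrix Finset

theorem traceNorm_eq_trace_of_mul_self {n p : ℕ} {M : Matrix (Fin n) (Fin p) ℝ}
    {S : Matrix (Fin p) (Fin p) ℝ} (hS : S.PosSemidef) (hSS : S * S = Mᴴ * M) :
    traceNorm M = S.trace := by
  open scoped MatrixOrder in
  have hM := posSemidef_conjTranspose_mul_self M
  have hsqrt : CFC.sqrt (Mᴴ * M) = S := CFC.sqrt_unique hSS hS.nonneg
  rw [CFC.sqrt_eq_cfc, cfc_nnreal_eq_real _ _ hM.nonneg, hM.1.cfc_eq] at hsqrt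
  rw [← hsqrt, traceNorm, IsHermitian.cfc, Unitary.conjStarAlgAut_apply]
  simp only [Real.sqrt]

namespace Matrix

variable {ι κ R : Type*} [DecidableEq κ]

def blockOuter [Mul R] [Zero R] (g : ι → κ) (u v : ι → R) : Matrix ι ι R :=
  of fun i j => if g i = g j then u i * v j else 0

section CommSemiring

variable [CommSemiring R] [Fintype ι]

theorem blockOuter_mul_blockOuter (g : ι → κ) (u v u' v' : ι → R) :
    blockOuter g u v * blockOuter g u' v' =
      blockOuter g (fun i => u i * ∑ l ∈ univ.filter (g · = g i), v l * u' l) v' := by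
  ext i j
  simp only [blockOuter, mul_apply, of_apply, ite_mul, zero_mul, mul_ite, mul_zero, mul_sum,
    sum_mul, sum_filter]
  by_cases h : g i = g j
  · simp only [h, if_true]
    refine sum_congr rfl fun l _ => ?_
    by_cases hl : g j = g l
    · simp only [hl, if_true]
      ring
    · simp [Ne.symm hl]
  · rw [if_neg h]
    exact sum_eq_zero fun l _ => by grind

theorem blockOuter_mul_diagonal [DecidableEq ι] (g : ι → κ) (u v w : ι → R) :
    blockOuter g u v * diagonal w = blockOuter g u (v * w) := by
  ext i j
  simp [blockOuter, mul_assoc]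

omit [Fintype ι] in
theorem transpose_blockOuter (g : ι → κ) (u v : ι → R) :
    (blockOuter g u v)ᵀ = blockOuter g v u := by
  ext i j
  simp [blockOuter, eq_comm, mul_comm]

theorem trace_blockOuter (g : ι → κ) (u v : ι → R) :
    (blockOuter g u v).trace = ∑ i, u i * v i := by
  simp [blockOuter, trace]

end CommSemiring

def fiberRows [Zero R] (g : ι → κ) (v : ι → R) : Matrix κ ι R :=
  of fun k i => if g i = k then v i else 0

theorem conjTranspose_fiberRows_mul_fiberRows [Fintype κ] [CommSemiring R] [StarRing R]
    (g : ι → κ) (v : ι → R) :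
    (fiberRows g v)ᴴ * fiberRows g v = blockOuter g (star v) v := by
  ext i j
  simp [blockOuter, fiberRows, mul_apply, eq_comm, apply_ite star]

theorem posSemidef_blockOuter_div [Fintype ι] [Fintype κ] (g : ι → κ) (w : ι → ℝ)
    {s : κ → ℝ} (hs : ∀ k, 0 ≤ s k) : (blockOuter g (fun i => w i / s (g i)) w).PosSemidef := by
  have hsqrt : blockOuter g (fun i => w i / s (g i)) w =
      blockOuter g (star fun i => w i / √(s (g i))) fun i => w i / √(s (g i)) := by
    ext i j
    simp only [blockOuter, of_apply, star_trivial]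
    split_ifs with h
    · rw [h, div_mul_div_comm, Real.mul_self_sqrt (hs _), div_mul_eq_mul_div]
    · rfl
  rw [hsqrt, ← conjTranspose_fiberRows_mul_fiberRows]
  exact posSemidef_conjTranspose_mul_self _

end Matrix

section GroupLasso

variable {ι κ : Type*} [Fintype ι] [DecidableEq κ] (g : ι → κ) (w : ι → ℝ)

noncomputable def blockNorm (k : κ) : ℝ :=
  √(∑ i ∈ univ.filter (g · = k), w i ^ 2)

theorem eq_zero_of_blockNorm_eq_zero {i : ι} (h : blockNorm g w (g i) = 0) : w i = 0 := by
  rw [blockNorm, Real.sqrt_eq_zero (sum_nonneg fun _ _ => sq_nonneg _),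
    sum_eq_zero_iff_of_nonneg fun _ _ => sq_nonneg _] at h
  exact pow_eq_zero_iff two_ne_zero |>.1 (h i (by simp))

theorem sum_mul_div_blockNorm (k : κ) :
    ∑ l ∈ univ.filter (g · = k), w l * (w l / blockNorm g w (g l)) = blockNorm g w k :=
  calc _ = (∑ l ∈ univ.filter (g · = k), w l ^ 2) / blockNorm g w k := by
        rw [sum_div]
        refine sum_congr rfl fun l hl => ?_
        rw [(mem_filter.1 hl).2]
        ring
    _ = blockNorm g w k := Real.div_sqrt

theorem sum_div_blockNorm_mul_eq_sum_blockNorm [Fintype κ] :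
    ∑ i, w i / blockNorm g w (g i) * w i = ∑ k, blockNorm g w k := by
  rw [← sum_fiberwise univ g]
  refine sum_congr rfl fun k _ => ?_
  rw [← sum_mul_div_blockNorm]
  exact sum_congr rfl fun l _ => mul_comm _ _

theorem sum_inv_sqrt_card_fiber_mul_self (i : ι) :
    ∑ l ∈ univ.filter (g · = g i),
      1 / √(#(univ.filter (g · = g l)) : ℝ) * (1 / √(#(univ.filter (g · = g l)) : ℝ)) = 1 := by
  have hcard : (0 : ℝ) < #(univ.filter (g · = g i)) := by
    exact_mod_cast card_pos.2 ⟨i, by simp⟩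
  rw [sum_congr rfl fun l hl => by rw [(mem_filter.1 hl).2], sum_const, nsmul_eq_mul,
    one_div_mul_one_div, Real.mul_self_sqrt hcard.le, mul_one_div_cancel hcard.ne']

end GroupLasso

theorem trace_lasso_group_lasso_general {p m : ℕ} (g : Fin p → Fin m)
    (w : Fin p → ℝ) :
    traceNorm
      ((Matrix.of fun i j : Fin p =>
          if g i = g j then
            1 / Real.sqrt ((Finset.univ.filter fun l => g l = g i).card) else 0) *
        Matrix.diagonal w) =
      ∑ k : Fin m, Real.sqrt (∑ i ∈ Finset.univ.filter fun l => g l = k, w i ^ 2) := by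
  let d : Fin p → ℝ := fun i => 1 / √(#(univ.filter (g · = g i)) : ℝ)
  have hP : (of fun i j : Fin p => if g i = g j then 1 / √(#(univ.filter (g · = g i)) : ℝ)
      else 0) = blockOuter g d 1 := by
    ext i j
    simp [blockOuter, d]
  have hMM : (blockOuter g d w)ᴴ * blockOuter g d w = blockOuter g w w := by
    rw [conjTranspose_eq_transpose_of_trivial, transpose_blockOuter, blockOuter_mul_blockOuter]
    congr 1
    ext i
    rw [sum_inv_sqrt_card_fiber_mul_self, mul_one]
  let S := blockOuter g (fun i => w i / blockNorm g w (g i)) w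
  have hSS : S * S = blockOuter g w w := by
    rw [blockOuter_mul_blockOuter]
    congr 1
    ext i
    rw [sum_mul_div_blockNorm, div_mul_cancel_of_imp (eq_zero_of_blockNorm_eq_zero g w)]
  have hS : S.PosSemidef := posSemidef_blockOuter_div g w fun _ => Real.sqrt_nonneg _
  rw [hP, blockOuter_mul_diagonal, one_mul,
    traceNorm_eq_trace_of_mul_self hS (hSS.trans hMM.symm), trace_blockOuter,
    sum_div_blockNorm_mul_eq_sum_blockNorm]
  rfl

theorem trace_lasso_group_lasso {p m : ℕ} (g : Fin p → Fin m) (hg : Function.Surjective g)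
    (w : Fin p → ℝ) :
    traceNorm
      ((Matrix.of fun i j : Fin p =>
          if g i = g j then
            1 / Real.sqrt ((Finset.univ.filter fun l => g l = g i).card) else 0) *
        Matrix.diagonal w) =
      ∑ k : Fin m, Real.sqrt (∑ i ∈ Finset.univ.filter fun l => g l = k, w i ^ 2) :=
  trace_lasso_group_lasso_general g w
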